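/- Let Y*ₜ = μ* + (T₄*)ₜ δ + ε*ₜ for t = 1,…,n, where T₄* is 0 on the first n₁+n₂ coordinates and 2 on the remaining ones, and ε*ₜ are real numbers. Let T₃ be 0 on the first n₁ coordinates, 1 on the next n₂+n₃, and 2 on the last n₄. For a vector T, define μ̂(T) = (1/n)Σₜ(Y*ₜ − Tₜδ) and Qₙ(T) = Σₜ(Y*ₜ − μ̂(T) − Tₜδ)². Then Qₙ(T₃) − Qₙ(T₄*) = 2δA + δ²V, where V = n₂+n₃−(n₂−n₃)²/n and A = ((n₂−n₃)/n)Σ_{t∈J₁∪J₄}ε*ₜ + ((n₂−n₃)/n + 1)Σ_{t∈J₃}ε*ₜ + ((n₂−n₃)/n − 1)Σ_{t∈J₂}ε*ₜ, with J₁,J₂,J₃,J₄ the consecutive blocks of sizes n₁,n₂,n₃,n₄. -/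

import Mathlib

/-!
`Q T` is the sum of squared deviations from the mean of the residual `Y - T δ`. For `T₄*`
this residual is `μ* + ε`, for `T₃` it is `μ* + ε + δ d` with `d = T₄* - T₃ = 1_{J₃} - 1_{J₂}`.
Since centring kills constants, expanding the square leaves `2δ ∑ ε (d - d̄) + δ² ∑ d (d - d̄)`,
and counting the blocks (`d̄ = (n₃ - n₂) / n`, `∑ d² = n₂ + n₃`) turns these into `A` and `V`.
-/

open Finset

section SampleMean

variable {ι : Type*} [Fintype ι]

noncomputable def sampleMean (x : ι → ℝ) : ℝ := (1 / (Fintype.card ι : ℝ)) * ∑ i, x i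

lemma sampleMean_add_mul (x y : ι → ℝ) (c : ℝ) :
    sampleMean (fun i => x i + c * y i) = sampleMean x + c * sampleMean y := by
  simp only [sampleMean, sum_add_distrib, ← mul_sum]
  ring

lemma sum_sub_sampleMean (x : ι → ℝ) : ∑ i, (x i - sampleMean x) = 0 := by
  rcases isEmpty_or_nonempty ι with hι | hι
  · simp
  · rw [sum_sub_distrib, sum_const, card_univ, nsmul_eq_mul, sampleMean]
    field_simp
    ring

lemma sum_mul_sub_sampleMean (x y : ι → ℝ) :
    ∑ i, x i * (y i - sampleMean y) = ∑ i, x i * y i - sampleMean y * ∑ i, x i := by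
  simp only [mul_sub, sum_sub_distrib, ← sum_mul, mul_comm]

lemma sum_const_add_mul_sub_sampleMean (a : ℝ) (x y : ι → ℝ) :
    ∑ i, (a + x i) * (y i - sampleMean y) = ∑ i, x i * (y i - sampleMean y) := by
  simp only [add_mul, sum_add_distrib, ← mul_sum, sum_sub_sampleMean, mul_zero, zero_add]

lemma sum_sub_sampleMean_mul_sub_sampleMean (x y : ι → ℝ) :
    ∑ i, (x i - sampleMean x) * (y i - sampleMean y) = ∑ i, x i * (y i - sampleMean y) := by
  simp only [sub_eq_add_neg (x _), add_comm (x _), sum_const_add_mul_sub_sampleMean]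

noncomputable def sumSqDev (x : ι → ℝ) : ℝ := ∑ i, (x i - sampleMean x) ^ 2

lemma sumSqDev_add_mul_sub (x y : ι → ℝ) (c : ℝ) :
    sumSqDev (fun i => x i + c * y i) - sumSqDev x
      = 2 * c * ∑ i, x i * (y i - sampleMean y) + c ^ 2 * ∑ i, y i * (y i - sampleMean y) := by
  have expand : ∀ i, (x i + c * y i - sampleMean (fun i => x i + c * y i)) ^ 2
      - (x i - sampleMean x) ^ 2 = 2 * c * ((x i - sampleMean x) * (y i - sampleMean y))
        + c ^ 2 * ((y i - sampleMean y) * (y i - sampleMean y)) := by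
    intro i
    rw [sampleMean_add_mul]
    ring
  rw [sumSqDev, sumSqDev, ← sum_sub_distrib, sum_congr rfl fun i _ => expand i,
    sum_add_distrib, ← mul_sum, ← mul_sum, sum_sub_sampleMean_mul_sub_sampleMean,
    sum_sub_sampleMean_mul_sub_sampleMean]

end SampleMean

section Segments

variable {n : ℕ}

lemma sum_ite_segment {a b : ℕ} (hab : a ≤ b) (hbn : b ≤ n) :
    ∑ t : Fin n, (if a ≤ (t : ℕ) ∧ (t : ℕ) < b then (1 : ℝ) else 0) = b - a := by
  rw [Fin.sum_univ_eq_sum_range (fun i => if a ≤ i ∧ i < b then (1 : ℝ) else 0), sum_boole]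
  have : (range n).filter (fun i => a ≤ i ∧ i < b) = Ico a b := by
    ext i
    simp only [mem_filter, mem_range, mem_Ico]
    omega
  rw [this, Nat.card_Ico, Nat.cast_sub hab]

variable {a b c : ℕ}

lemma sum_sq_ite_segment_sub_ite_segment (hab : a ≤ b) (hbc : b ≤ c) (hcn : c ≤ n) :
    ∑ t : Fin n, ((if b ≤ (t : ℕ) ∧ (t : ℕ) < c then (1 : ℝ) else 0)
      - (if a ≤ (t : ℕ) ∧ (t : ℕ) < b then (1 : ℝ) else 0)) ^ 2
      = (c - b : ℝ) + (b - a) := by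
  rw [← sum_ite_segment hbc hcn, ← sum_ite_segment hab (hbc.trans hcn), ← sum_add_distrib]
  refine sum_congr rfl fun t _ => ?_
  split_ifs <;> first | omega | norm_num

lemma sum_mul_ite_segment_sub_ite_segment (x : Fin n → ℝ) :
    ∑ t, x t * ((if b ≤ (t : ℕ) ∧ (t : ℕ) < c then (1 : ℝ) else 0)
      - (if a ≤ (t : ℕ) ∧ (t : ℕ) < b then (1 : ℝ) else 0))
      = ∑ t ∈ univ.filter (fun t : Fin n => b ≤ (t : ℕ) ∧ (t : ℕ) < c), x t
        - ∑ t ∈ univ.filter (fun t : Fin n => a ≤ (t : ℕ) ∧ (t : ℕ) < b), x t := by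
  simp only [mul_sub, mul_ite, mul_one, mul_zero, sum_sub_distrib, sum_filter]

lemma sum_eq_sum_outside_add_sum_segment_add_sum_segment (hab : a ≤ b) (hbc : b ≤ c)
    (x : Fin n → ℝ) :
    ∑ t, x t = ∑ t ∈ univ.filter (fun t : Fin n => (t : ℕ) < a ∨ c ≤ (t : ℕ)), x t
      + ∑ t ∈ univ.filter (fun t : Fin n => a ≤ (t : ℕ) ∧ (t : ℕ) < b), x t
      + ∑ t ∈ univ.filter (fun t : Fin n => b ≤ (t : ℕ) ∧ (t : ℕ) < c), x t := by
  simp only [sum_filter, ← sum_add_distrib]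
  refine sum_congr rfl fun t _ => ?_
  split_ifs <;> first | omega | ring

end Segments

theorem Q_diff_decomposition_general
    (n₁ n₂ n₃ n₄ n : ℕ)
    (hn : n = n₁ + n₂ + n₃ + n₄)
    (δ μstar : ℝ) (ε Y T₃ T₄ : Fin n → ℝ)
    (hT₄ : ∀ t : Fin n, T₄ t = if (t : ℕ) < n₁ + n₂ then 0 else 2)
    (hT₃ : ∀ t : Fin n, T₃ t =
      if (t : ℕ) < n₁ then 0 else if (t : ℕ) < n₁ + n₂ + n₃ then 1 else 2)
    (hY : ∀ t : Fin n, Y t = μstar + T₄ t * δ + ε t)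
    (μhat : (Fin n → ℝ) → ℝ)
    (hμhat : ∀ T : Fin n → ℝ, μhat T = (1 / (n : ℝ)) * ∑ t, (Y t - T t * δ))
    (Q : (Fin n → ℝ) → ℝ)
    (hQ : ∀ T : Fin n → ℝ, Q T = ∑ t, (Y t - μhat T - T t * δ) ^ 2)
    (A V : ℝ)
    (hA : A = (((n₂ : ℝ) - n₃) / n) *
        (∑ t ∈ Finset.univ.filter
          (fun t : Fin n => (t : ℕ) < n₁ ∨ n₁ + n₂ + n₃ ≤ (t : ℕ)), ε t) +
      (((n₂ : ℝ) - n₃) / n + 1) *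
        (∑ t ∈ Finset.univ.filter
          (fun t : Fin n => n₁ + n₂ ≤ (t : ℕ) ∧ (t : ℕ) < n₁ + n₂ + n₃), ε t) +
      (((n₂ : ℝ) - n₃) / n - 1) *
        (∑ t ∈ Finset.univ.filter
          (fun t : Fin n => n₁ ≤ (t : ℕ) ∧ (t : ℕ) < n₁ + n₂), ε t))
    (hV : V = (n₂ : ℝ) + n₃ - ((n₂ : ℝ) - n₃) ^ 2 / n) :
    Q T₃ - Q T₄ = 2 * δ * A + δ ^ 2 * V := by
  have hQ_sumSqDev (T : Fin n → ℝ) : Q T = sumSqDev (fun t => Y t - T t * δ) := by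
    simp only [hQ, hμhat, sumSqDev, sampleMean, Fintype.card_fin, sub_right_comm]
  have hd : ∀ t, T₄ t - T₃ t =
      (if n₁ + n₂ ≤ (t : ℕ) ∧ (t : ℕ) < n₁ + n₂ + n₃ then (1 : ℝ) else 0)
      - (if n₁ ≤ (t : ℕ) ∧ (t : ℕ) < n₁ + n₂ then (1 : ℝ) else 0) := by
    intro t
    rw [hT₄, hT₃]
    split_ifs <;> first | omega | norm_num
  have hres₃ :
      (fun t => Y t - T₃ t * δ) = fun t => (μstar + ε t) + δ * (T₄ t - T₃ t) := by
    funext t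
    rw [hY]
    ring
  have hres₄ : (fun t => Y t - T₄ t * δ) = fun t => μstar + ε t := by
    funext t
    rw [hY]
    ring
  rw [hQ_sumSqDev, hQ_sumSqDev, hres₃, hres₄, sumSqDev_add_mul_sub,
    sum_const_add_mul_sub_sampleMean, sum_mul_sub_sampleMean, sum_mul_sub_sampleMean, sampleMean,
    Fintype.card_fin]
  simp only [hd, ← sq]
  rw [sum_mul_ite_segment_sub_ite_segment,
    sum_sq_ite_segment_sub_ite_segment (by omega) (by omega) (by omega),
    sum_sub_distrib, sum_ite_segment (by omega) (by omega), sum_ite_segment (by omega) (by omega),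
    sum_eq_sum_outside_add_sum_segment_add_sum_segment (a := n₁) (b := n₁ + n₂)
      (c := n₁ + n₂ + n₃) (by omega) (by omega) ε, hA, hV]
  push_cast
  ring

/-- Deterministic decomposition `Qₙ(T₃) − Qₙ(T₄*) = 2δA + δ²V` of the difference of
residual sums of squares between the three-segment segmentation `T₃` and the true
two-segment segmentation `T₄*`. -/
theorem Q_diff_decomposition
    (n₁ n₂ n₃ n₄ n : ℕ) (h₁ : 0 < n₁) (h₂ : 0 < n₂) (h₃ : 0 < n₃) (h₄ : 0 < n₄)
    (hn : n = n₁ + n₂ + n₃ + n₄)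
    (δ μstar : ℝ) (ε Y T₃ T₄ : Fin n → ℝ)
    (hT₄ : ∀ t : Fin n, T₄ t = if (t : ℕ) < n₁ + n₂ then 0 else 2)
    (hT₃ : ∀ t : Fin n, T₃ t =
      if (t : ℕ) < n₁ then 0 else if (t : ℕ) < n₁ + n₂ + n₃ then 1 else 2)
    (hY : ∀ t : Fin n, Y t = μstar + T₄ t * δ + ε t)
    (μhat : (Fin n → ℝ) → ℝ)
    (hμhat : ∀ T : Fin n → ℝ, μhat T = (1 / (n : ℝ)) * ∑ t, (Y t - T t * δ))
    (Q : (Fin n → ℝ) → ℝ)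
    (hQ : ∀ T : Fin n → ℝ, Q T = ∑ t, (Y t - μhat T - T t * δ) ^ 2)
    (A V : ℝ)
    (hA : A = (((n₂ : ℝ) - n₃) / n) *
        (∑ t ∈ Finset.univ.filter
          (fun t : Fin n => (t : ℕ) < n₁ ∨ n₁ + n₂ + n₃ ≤ (t : ℕ)), ε t) +
      (((n₂ : ℝ) - n₃) / n + 1) *
        (∑ t ∈ Finset.univ.filter
          (fun t : Fin n => n₁ + n₂ ≤ (t : ℕ) ∧ (t : ℕ) < n₁ + n₂ + n₃), ε t) +
      (((n₂ : ℝ) - n₃) / n - 1) *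
        (∑ t ∈ Finset.univ.filter
          (fun t : Fin n => n₁ ≤ (t : ℕ) ∧ (t : ℕ) < n₁ + n₂), ε t))
    (hV : V = (n₂ : ℝ) + n₃ - ((n₂ : ℝ) - n₃) ^ 2 / n) :
    Q T₃ - Q T₄ = 2 * δ * A + δ ^ 2 * V :=
  Q_diff_decomposition_general n₁ n₂ n₃ n₄ n hn δ μstar ε Y T₃ T₄ hT₄ hT₃ hY μhat hμhat Q hQ A V hA
    hV
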